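/- Fix a>0, b>0 and λ∈(0,1), and assume T₁ < t₀−λ. There exists a constant c>0, depending only on a, b, λ and the doubling constant c_d, such that for every s≥1: z_a^b(λ;s) ≥ c ∫_{λ^s}^{λ} ∫_{1/λ}^{∞} ( m_λ(ρ, t₀−η) / |B(x₀,√η)| ) ρ^{−(1+b)} dρ η^{−1} dη. -/

import Mathlib

open MeasureTheory Set
open scoped ENNReal NNReal

noncomputable section

/-- ℝ^N with Euclidean structure and Lebesgue measure. -/
abbrev Vec (N : ℕ) := EuclideanSpace ℝ (Fin N)

/-- The `d`-ball `B(x,r) = {y : d(x,y) < r}`. -/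
def dBall {N : ℕ} (d : Vec N → Vec N → ℝ) (x : Vec N) (r : ℝ) : Set (Vec N) :=
  {y | d x y < r}

/-- Lebesgue measure is doubling with respect to `d`, with doubling constant `cd`. -/
def Doubling {N : ℕ} (d : Vec N → Vec N → ℝ) (cd : ℝ) : Prop :=
  ∀ (x : Vec N) (r : ℝ), 0 < r →
    volume (dBall d x (2 * r)) ≤ ENNReal.ofReal cd * volume (dBall d x r)

/-- `d` is a metric on ℝ^N inducing the Euclidean topology (with bounded `d`-balls,
as in assumption (D1) of the paper). -/
structure GoodMetric {N : ℕ} (d : Vec N → Vec N → ℝ) : Prop where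
  nonneg : ∀ x y, 0 ≤ d x y
  eq_zero_iff : ∀ x y, d x y = 0 ↔ x = y
  symm : ∀ x y, d x y = d y x
  triangle : ∀ x y z, d x z ≤ d x y + d y z
  cont : Continuous fun p : Vec N × Vec N => d p.1 p.2
  finer : ∀ (x : Vec N) (ε : ℝ), 0 < ε → ∃ δ > 0, ∀ y, d x y < δ → dist x y < ε
  bounded : ∀ (x : Vec N) (r : ℝ), Bornology.IsBounded (dBall d x r)

/-- The strip `S = ℝ^N × (T₁,T₂)`. -/
def strip (N : ℕ) (T₁ T₂ : EReal) : Set (Vec N × ℝ) :=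
  {z | T₁ < (z.2 : EReal) ∧ (z.2 : EReal) < T₂}

/-- The `d`-Gaussian kernel of exponent `a`. -/
def gaussK {N : ℕ} (d : Vec N → Vec N → ℝ) (a : ℝ) (z ζ : Vec N × ℝ) : ℝ≥0∞ :=
  if ζ.2 < z.2 then
    (volume (dBall d z.1 (Real.sqrt (z.2 - ζ.2))))⁻¹ *
      ENNReal.ofReal (Real.exp (-a * d z.1 ζ.1 ^ 2 / (z.2 - ζ.2)))
  else 0

/-- Capacity of `F` with respect to the kernel `K`: supremum of total masses of
nonnegative Radon measures supported in `F` whose `K`-potential is `≤ 1` on `X`. -/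
def capac {α : Type*} [TopologicalSpace α] [MeasurableSpace α]
    (X : Set α) (K : α → α → ℝ≥0∞) (F : Set α) : ℝ≥0∞ :=
  ⨆ (μ : Measure α) (_ : μ.InnerRegular ∧ IsLocallyFiniteMeasure μ ∧ μ Fᶜ = 0 ∧
      ∀ z ∈ X, ∫⁻ ζ, K z ζ ∂μ ≤ 1), μ F

/-- The parabolic counterpart `d̂` of `d`. -/
def pdist {N : ℕ} (d : Vec N → Vec N → ℝ) (z ζ : Vec N × ℝ) : ℝ :=
  (d z.1 ζ.1 ^ 4 + (z.2 - ζ.2) ^ 2) ^ (1 / 4 : ℝ)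

/-- The parabolic ball `B̂(z,r)` (as a subset of ℝ^{N+1}). -/
def pBall {N : ℕ} (d : Vec N → Vec N → ℝ) (z : Vec N × ℝ) (r : ℝ) : Set (Vec N × ℝ) :=
  {ζ | pdist d z ζ < r}

/-- The ring-shaped set `Ω_k^h(z₀,λ)`. -/
def ringSet {N : ℕ} (d : Vec N → Vec N → ℝ) (S Ω : Set (Vec N × ℝ)) (z₀ : Vec N × ℝ)
    (lam : ℝ) (k h : ℤ) : Set (Vec N × ℝ) :=
  {ζ ∈ S \ Ω | lam ^ (k + 1) ≤ z₀.2 - ζ.2 ∧ z₀.2 - ζ.2 ≤ lam ^ k ∧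
    (1 / lam) ^ (h - 1) ≤ Real.exp (d z₀.1 ζ.1 ^ 2 / (z₀.2 - ζ.2)) ∧
    Real.exp (d z₀.1 ζ.1 ^ 2 / (z₀.2 - ζ.2)) ≤ (1 / lam) ^ h ∧
    pdist d z₀ ζ ≤ Real.sqrt lam}

/-- The set `D_k^h(z₀,λ)`. -/
def DSet {N : ℕ} (d : Vec N → Vec N → ℝ) (S Ω : Set (Vec N × ℝ)) (z₀ : Vec N × ℝ)
    (lam : ℝ) (k h : ℤ) : Set (Vec N × ℝ) :=
  {ζ ∈ S \ Ω | lam ^ (k + 1) ≤ z₀.2 - ζ.2 ∧ z₀.2 - ζ.2 ≤ lam ^ k ∧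
    Real.exp (d z₀.1 ζ.1 ^ 2 / (z₀.2 - ζ.2)) ≤ (1 / lam) ^ h ∧
    pdist d z₀ ζ ≤ Real.sqrt lam}

/-- The Wiener-type series `z_a^b(λ;s)`. -/
def zSeries {N : ℕ} (d : Vec N → Vec N → ℝ) (S Ω : Set (Vec N × ℝ)) (z₀ : Vec N × ℝ)
    (a b lam s : ℝ) : ℝ≥0∞ :=
  ∑' k : ℕ, ∑' h : ℕ,
    if 1 ≤ k ∧ (k : ℝ) ≤ s ∧ 1 ≤ h then
      ENNReal.ofReal (lam ^ (b * (h : ℝ))) *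
        capac S (gaussK d a) (DSet d S Ω z₀ lam (k : ℤ) (h : ℤ)) /
        volume (dBall d z₀.1 (lam ^ ((k : ℝ) / 2)))
    else 0

/-- The section `E_λ(ρ,τ)`. -/
def Eset {N : ℕ} (d : Vec N → Vec N → ℝ) (S Ω : Set (Vec N × ℝ)) (z₀ : Vec N × ℝ)
    (lam ρ τ : ℝ) : Set (Vec N) :=
  {x | (x, τ) ∈ S \ Ω ∧ pdist d z₀ (x, τ) ≤ Real.sqrt lam ∧
    Real.exp (d z₀.1 x ^ 2 / (z₀.2 - τ)) ≤ ρ}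

end

/-!
Cut `η ∈ (λ^s, λ)` into the layers `λ^(k+1) < η ≤ λ^k` and `ρ > 1/λ` into the layers
`λ^(-n) ≤ ρ < λ^(-(n+1))`. On such a box the section `E_λ(ρ, t₀ - η)` lies in the time slice of
`D_k^(n+1)`, integrating the weight `ρ^(-(1+b)) η⁻¹` over the `ρ`-layer gives at most
`λ^(-(b+2)) λ^(-k) λ^(b(n+1))`, and doubling compares `|B(x₀, √η)|` with `|B(x₀, λ^(k/2))|`.
Integrating the slices over `η` gives `|D_k^(n+1)|`, and `|D| ≤ C₀ λ^k C_a(D)` for any `D` inside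
a time strip of length `λ^k`: the normalized Lebesgue measure on `D` is admissible, because
summing the Gaussian over the `d`-annuli of width `√(t - τ)` bounds each time slice of its
potential by `C₀ = Σ_j cd^j e^(-a j²)`.
-/

open Real

namespace GoodMetric

variable {N : ℕ} {d : Vec N → Vec N → ℝ}

lemma continuous_left (hd : GoodMetric d) (x : Vec N) : Continuous (d x) :=
  hd.cont.comp (Continuous.prodMk_right x)

lemma measurable_comp_fst (hd : GoodMetric d) (x : Vec N) :
    Measurable fun ζ : Vec N × ℝ => d x ζ.1 :=
  ((hd.continuous_left x).comp continuous_fst).measurable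

lemma isOpen_dBall (hd : GoodMetric d) (x : Vec N) (r : ℝ) : IsOpen (dBall d x r) :=
  isOpen_lt (hd.continuous_left x) continuous_const

lemma volume_dBall_pos (hd : GoodMetric d) (x : Vec N) {r : ℝ} (hr : 0 < r) :
    0 < volume (dBall d x r) :=
  (hd.isOpen_dBall x r).measure_pos volume ⟨x, by simpa [dBall, (hd.eq_zero_iff x x).2 rfl]⟩

lemma le_pdist (hd : GoodMetric d) (z ζ : Vec N × ℝ) : d z.1 ζ.1 ≤ pdist d z ζ := by
  have h4 : d z.1 ζ.1 = (d z.1 ζ.1 ^ 4) ^ (1 / 4 : ℝ) := by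
    rw [show (1 / 4 : ℝ) = ((4 : ℕ) : ℝ)⁻¹ by norm_num,
      Real.pow_rpow_inv_natCast (hd.nonneg _ _) (by norm_num)]
  rw [h4, pdist]
  gcongr
  exact le_add_of_nonneg_right (sq_nonneg _)

end GoodMetric

section Balls

variable {N : ℕ} {d : Vec N → Vec N → ℝ} {cd : ℝ}

lemma dBall_subset_dBall (x : Vec N) {r r' : ℝ} (h : r ≤ r') : dBall d x r ⊆ dBall d x r' :=
  fun _ hy => lt_of_lt_of_le hy h

lemma Doubling.volume_dBall_two_pow_mul_le (hdb : Doubling d cd) (x : Vec N) (m : ℕ) {r : ℝ}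
    (hr : 0 < r) :
    volume (dBall d x (2 ^ m * r)) ≤ ENNReal.ofReal cd ^ m * volume (dBall d x r) := by
  induction m with
  | zero => simp
  | succ m ih =>
    calc volume (dBall d x (2 ^ (m + 1) * r))
        = volume (dBall d x (2 * (2 ^ m * r))) := by rw [pow_succ, mul_comm _ (2 : ℝ), mul_assoc]
      _ ≤ ENNReal.ofReal cd * volume (dBall d x (2 ^ m * r)) := hdb x _ (by positivity)
      _ ≤ ENNReal.ofReal cd * (ENNReal.ofReal cd ^ m * volume (dBall d x r)) := by gcongr
      _ = ENNReal.ofReal cd ^ (m + 1) * volume (dBall d x r) := by ring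

lemma Doubling.volume_dBall_le_of_le_two_pow_mul (hdb : Doubling d cd) (hcd : 0 ≤ cd)
    (x : Vec N) {m : ℕ} {r r' : ℝ} (hr' : 0 < r') (h : r ≤ 2 ^ m * r') :
    volume (dBall d x r) ≤ ENNReal.ofReal (cd ^ m) * volume (dBall d x r') := by
  rw [ENNReal.ofReal_pow hcd]
  exact (measure_mono (dBall_subset_dBall x h)).trans (hdb.volume_dBall_two_pow_mul_le x m hr')

end Balls

/-- Bounds the Gaussian integral at scale `r` by summing over the `d`-annuli of width `r`. -/
noncomputable def gaussConst (a cd : ℝ) : ℝ := ∑' j : ℕ, cd ^ j * exp (-a * j ^ 2)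

lemma summable_pow_mul_exp_neg_mul_sq {a c : ℝ} (ha : 0 < a) (hc : 0 < c) :
    Summable fun j : ℕ => c ^ j * exp (-a * j ^ 2) := by
  refine summable_of_ratio_test_tendsto_lt_one zero_lt_one
    (Filter.Eventually.of_forall fun j => by positivity) ?_
  have hratio : ∀ j : ℕ, ‖c ^ (j + 1) * exp (-a * ((j + 1 : ℕ) : ℝ) ^ 2)‖ /
      ‖c ^ j * exp (-a * (j : ℝ) ^ 2)‖ = c * exp (-(a * (2 * j + 1))) := by
    intro j
    have hexp : exp (-a * ((j + 1 : ℕ) : ℝ) ^ 2) = exp (-(a * (2 * j + 1))) * exp (-a * j ^ 2) := by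
      rw [← exp_add]; push_cast; ring_nf
    rw [Real.norm_of_nonneg (by positivity), Real.norm_of_nonneg (by positivity),
      div_eq_iff (by positivity), hexp]
    ring
  simp_rw [hratio]
  rw [← mul_zero c]
  refine Filter.Tendsto.const_mul c
    (tendsto_exp_atBot.comp (Filter.tendsto_neg_atTop_atBot.comp ?_))
  exact Filter.Tendsto.const_mul_atTop ha (Filter.tendsto_atTop_add_const_right _ _
    (tendsto_natCast_atTop_atTop.const_mul_atTop two_pos))

lemma gaussConst_pos {a cd : ℝ} (ha : 0 < a) (hcd : 0 < cd) : 0 < gaussConst a cd := by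
  have h0 := (summable_pow_mul_exp_neg_mul_sq ha hcd).le_tsum 0 (fun j _ => by positivity)
  exact one_pos.trans_le (by simpa [gaussConst] using h0)

section Potential

variable {N : ℕ} {d : Vec N → Vec N → ℝ} {a cd : ℝ}

lemma lintegral_exp_neg_mul_sq_le (hd : GoodMetric d) (hdb : Doubling d cd) (ha : 0 < a)
    (hcd : 0 < cd) (x : Vec N) {r : ℝ} (hr : 0 < r) :
    ∫⁻ ξ, ENNReal.ofReal (exp (-a * d x ξ ^ 2 / r ^ 2)) ≤
      ENNReal.ofReal (gaussConst a cd) * volume (dBall d x r) := by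
  -- on the annulus `j r ≤ d x ξ < (j + 1) r` the integrand is at most `exp (-a j²)`
  have hpt : ∀ ξ, ENNReal.ofReal (exp (-a * d x ξ ^ 2 / r ^ 2)) ≤
      ∑' j : ℕ, (dBall d x ((j + 1) * r)).indicator
        (fun _ => ENNReal.ofReal (exp (-a * j ^ 2))) ξ := by
    intro ξ
    set j := ⌊d x ξ / r⌋₊
    have hj : (j : ℝ) * r ≤ d x ξ := (le_div_iff₀ hr).1 (Nat.floor_le (by
      have := hd.nonneg x ξ; positivity))
    have hξ : ξ ∈ dBall d x ((j + 1) * r) := (div_lt_iff₀ hr).1 (Nat.lt_floor_add_one _)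
    refine le_trans ?_ (ENNReal.le_tsum j)
    rw [indicator_of_mem hξ, neg_mul, neg_mul, neg_div, mul_div_assoc]
    gcongr
    rw [le_div_iff₀ (by positivity), ← mul_pow]
    gcongr
  calc ∫⁻ ξ, ENNReal.ofReal (exp (-a * d x ξ ^ 2 / r ^ 2))
      ≤ ∫⁻ ξ, ∑' j : ℕ, (dBall d x ((j + 1) * r)).indicator
          (fun _ => ENNReal.ofReal (exp (-a * j ^ 2))) ξ := lintegral_mono hpt
    _ = ∑' j : ℕ, ENNReal.ofReal (exp (-a * j ^ 2)) * volume (dBall d x ((j + 1) * r)) := by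
      rw [lintegral_tsum fun j => (measurable_const.indicator
        (hd.isOpen_dBall x _).measurableSet).aemeasurable]
      simp_rw [lintegral_indicator_const (hd.isOpen_dBall x _).measurableSet]
    _ ≤ ∑' j : ℕ, ENNReal.ofReal (exp (-a * j ^ 2)) *
          (ENNReal.ofReal (cd ^ j) * volume (dBall d x r)) := by
      gcongr with j
      refine hdb.volume_dBall_le_of_le_two_pow_mul hcd.le x hr ?_
      gcongr
      exact_mod_cast Nat.lt_two_pow_self
    _ = ENNReal.ofReal (gaussConst a cd) * volume (dBall d x r) := by
      rw [gaussConst, ENNReal.ofReal_tsum_of_nonneg (fun j => by positivity)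
        (summable_pow_mul_exp_neg_mul_sq ha hcd), ← ENNReal.tsum_mul_right]
      congr 1 with j
      rw [ENNReal.ofReal_mul (by positivity)]
      ring

lemma measurable_gaussK (hd : GoodMetric d) (a : ℝ) (z : Vec N × ℝ) :
    Measurable (gaussK d a z) := by
  have hvol : Antitone fun τ : ℝ => volume (dBall d z.1 (√(z.2 - τ))) :=
    fun τ τ' h => measure_mono (dBall_subset_dBall z.1 (Real.sqrt_le_sqrt (by linarith)))
  refine Measurable.ite (measurableSet_lt measurable_snd measurable_const)
    ((hvol.measurable.comp measurable_snd).inv.mul ?_) measurable_const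
  exact ENNReal.measurable_ofReal.comp (measurable_exp.comp
    ((((hd.measurable_comp_fst z.1).pow_const 2).const_mul (-a)).div
      (measurable_const.sub measurable_snd)))

lemma lintegral_gaussK_slice_le (hd : GoodMetric d) (hdb : Doubling d cd) (ha : 0 < a)
    (hcd : 0 < cd) (z : Vec N × ℝ) (τ : ℝ) :
    ∫⁻ ξ, gaussK d a z (ξ, τ) ≤ ENNReal.ofReal (gaussConst a cd) := by
  by_cases hτ : τ < z.2
  · have ht : 0 < z.2 - τ := sub_pos.2 hτ
    have hr : 0 < √(z.2 - τ) := Real.sqrt_pos.2 ht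
    have hV := hd.volume_dBall_pos z.1 hr
    have hVtop : volume (dBall d z.1 √(z.2 - τ)) ≠ ∞ := (hd.bounded _ _).measure_lt_top.ne
    have hgauss := lintegral_exp_neg_mul_sq_le hd hdb ha hcd z.1 hr
    rw [Real.sq_sqrt ht.le] at hgauss
    simp only [gaussK, if_pos hτ]
    rw [lintegral_const_mul' _ _ (ENNReal.inv_ne_top.2 hV.ne'),
      ENNReal.inv_mul_le_iff hV.ne' hVtop, mul_comm]
    exact hgauss
  · simp [gaussK, hτ]

lemma setLIntegral_gaussK_le (hd : GoodMetric d) (hdb : Doubling d cd) (ha : 0 < a)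
    (hcd : 0 < cd) {D : Set (Vec N × ℝ)} {t₁ t₂ : ℝ} (hD : ∀ ζ ∈ D, ζ.2 ∈ Icc t₁ t₂)
    (z : Vec N × ℝ) :
    ∫⁻ ζ in D, gaussK d a z ζ ≤ ENNReal.ofReal (gaussConst a cd * (t₂ - t₁)) := by
  calc ∫⁻ ζ in D, gaussK d a z ζ
      ≤ ∫⁻ ζ in univ ×ˢ Icc t₁ t₂, gaussK d a z ζ :=
        lintegral_mono_set fun ζ hζ => ⟨trivial, hD ζ hζ⟩
    _ = ∫⁻ τ in Icc t₁ t₂, ∫⁻ ξ, gaussK d a z (ξ, τ) := by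
      rw [Measure.volume_eq_prod, ← Measure.prod_restrict, Measure.restrict_univ]
      exact lintegral_prod_symm _ (measurable_gaussK hd a z).aemeasurable
    _ ≤ ∫⁻ _ in Icc t₁ t₂, ENNReal.ofReal (gaussConst a cd) :=
        lintegral_mono fun τ => lintegral_gaussK_slice_le hd hdb ha hcd z τ
    _ = ENNReal.ofReal (gaussConst a cd * (t₂ - t₁)) := by
      rw [setLIntegral_const, Real.volume_Icc, ← ENNReal.ofReal_mul (gaussConst_pos ha hcd).le]

end Potential

section Capacity

variable {N : ℕ}

lemma volume_le_mul_capac {X D : Set (Vec N × ℝ)} {K : Vec N × ℝ → Vec N × ℝ → ℝ≥0∞}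
    (hD : MeasurableSet D) (hDb : Bornology.IsBounded D) {L : ℝ≥0∞} (hL0 : L ≠ 0) (hL : L ≠ ∞)
    (hK : ∀ z ∈ X, ∫⁻ ζ in D, K z ζ ≤ L) :
    volume D ≤ L * capac X K D := by
  set μ : Measure (Vec N × ℝ) := L⁻¹ • volume.restrict D
  have : IsFiniteMeasure μ := ⟨by
    simpa [μ] using ENNReal.mul_lt_top (ENNReal.inv_lt_top.2 (pos_iff_ne_zero.2 hL0))
      hDb.measure_lt_top⟩
  have hadm : μ.InnerRegular ∧ IsLocallyFiniteMeasure μ ∧ μ Dᶜ = 0 ∧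
      ∀ z ∈ X, ∫⁻ ζ, K z ζ ∂μ ≤ 1 := by
    refine ⟨Measure.InnerRegular.smul _, inferInstance, ?_, fun z hz => ?_⟩
    · simp [μ, Measure.restrict_apply hD.compl]
    · rw [lintegral_smul_measure, smul_eq_mul, ENNReal.inv_mul_le_iff hL0 hL, mul_one]
      exact hK z hz
  have hμD : μ D = L⁻¹ * volume D := by simp [μ]
  calc volume D = L * (L⁻¹ * volume D) := by
        rw [← mul_assoc, ENNReal.mul_inv_cancel hL0 hL, one_mul]
    _ = L * μ D := by rw [hμD]
    _ ≤ L * capac X K D := by gcongr; exact le_iSup₂_of_le μ hadm le_rfl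

variable {d : Vec N → Vec N → ℝ} {a cd : ℝ}

lemma volume_le_mul_capac_gaussK (hd : GoodMetric d) (hdb : Doubling d cd) (ha : 0 < a)
    (hcd : 0 < cd) (X : Set (Vec N × ℝ)) {D : Set (Vec N × ℝ)} (hD : MeasurableSet D)
    (hDb : Bornology.IsBounded D) {t₁ t₂ : ℝ} (ht : t₁ < t₂) (hDt : ∀ ζ ∈ D, ζ.2 ∈ Icc t₁ t₂) :
    volume D ≤ ENNReal.ofReal (gaussConst a cd * (t₂ - t₁)) * capac X (gaussK d a) D :=
  volume_le_mul_capac hD hDb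
    (ENNReal.ofReal_pos.2 (mul_pos (gaussConst_pos ha hcd) (sub_pos.2 ht))).ne'
    ENNReal.ofReal_ne_top fun z _ => setLIntegral_gaussK_le hd hdb ha hcd hDt z

end Capacity

section Slices

variable {N : ℕ}

lemma measurable_volume_slice_sub {D : Set (Vec N × ℝ)} (hD : MeasurableSet D) (t : ℝ) :
    Measurable fun η => volume {x : Vec N | (x, t - η) ∈ D} :=
  (measurable_measure_prodMk_right hD).comp (measurable_const.sub measurable_id)

lemma lintegral_volume_slice_sub {D : Set (Vec N × ℝ)} (hD : MeasurableSet D) (t : ℝ) :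
    ∫⁻ η, volume {x : Vec N | (x, t - η) ∈ D} = volume D := by
  rw [lintegral_sub_left_eq_self (fun τ => volume {x : Vec N | (x, τ) ∈ D}) t,
    Measure.volume_eq_prod, Measure.prod_apply_symm hD]
  rfl

end Slices

section Sections

variable {N : ℕ} {d : Vec N → Vec N → ℝ} {S Ω : Set (Vec N × ℝ)} {z₀ : Vec N × ℝ} {lam : ℝ}

lemma measurableSet_DSet (hd : GoodMetric d) (hS : MeasurableSet S) (hΩ : MeasurableSet Ω)
    (z₀ : Vec N × ℝ) (lam : ℝ) (k h : ℤ) : MeasurableSet (DSet d S Ω z₀ lam k h) := by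
  have hτ : Measurable fun ζ : Vec N × ℝ => z₀.2 - ζ.2 := measurable_const.sub measurable_snd
  have hexp : Measurable fun ζ : Vec N × ℝ => exp (d z₀.1 ζ.1 ^ 2 / (z₀.2 - ζ.2)) :=
    measurable_exp.comp (((hd.measurable_comp_fst z₀.1).pow_const 2).div hτ)
  have hpdist : Measurable fun ζ : Vec N × ℝ => pdist d z₀ ζ :=
    (((hd.measurable_comp_fst z₀.1).pow_const 4).add (hτ.pow_const 2)).pow_const _
  exact (hS.diff hΩ).inter ((measurableSet_le measurable_const hτ).inter
    ((measurableSet_le hτ measurable_const).inter ((measurableSet_le hexp measurable_const).inter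
      (measurableSet_le hpdist measurable_const))))

lemma isBounded_DSet (hd : GoodMetric d) (z₀ : Vec N × ℝ) (lam : ℝ) (k h : ℤ) :
    Bornology.IsBounded (DSet d S Ω z₀ lam k h) := by
  refine ((hd.bounded z₀.1 (√lam + 1)).prod (Metric.isBounded_Icc (z₀.2 - lam ^ k)
    (z₀.2 - lam ^ (k + 1)))).subset ?_
  rintro ζ ⟨-, h₁, h₂, -, h₄⟩
  exact ⟨by simp only [dBall, mem_ofPred_eq]; linarith [hd.le_pdist z₀ ζ],
    by linarith, by linarith⟩

lemma snd_mem_Icc_of_mem_DSet (hl0 : 0 < lam) (k h : ℕ) {ζ : Vec N × ℝ}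
    (hζ : ζ ∈ DSet d S Ω z₀ lam k h) : ζ.2 ∈ Icc (z₀.2 - lam ^ k) z₀.2 := by
  obtain ⟨-, h₁, h₂, -⟩ := hζ
  have : 0 < lam ^ ((k : ℤ) + 1) := zpow_pos hl0 _
  rw [zpow_natCast] at h₂
  constructor <;> linarith

lemma Eset_mono {ρ ρ' : ℝ} (h : ρ ≤ ρ') (τ : ℝ) :
    Eset d S Ω z₀ lam ρ τ ⊆ Eset d S Ω z₀ lam ρ' τ :=
  fun _ ⟨hS, hp, hρ⟩ => ⟨hS, hp, hρ.trans h⟩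

lemma Eset_subset_slice_DSet (k h : ℕ) {η : ℝ} (hη : η ∈ Ioc (lam ^ (k + 1)) (lam ^ k)) :
    Eset d S Ω z₀ lam ((1 / lam) ^ h) (z₀.2 - η) ⊆
      {x | (x, z₀.2 - η) ∈ DSet d S Ω z₀ lam k h} := by
  rintro x ⟨hS, hp, hρ⟩
  refine ⟨hS, ?_, ?_, ?_, hp⟩ <;> simp only [sub_sub_cancel] <;> norm_cast
  exacts [hη.1.le, hη.2, by rwa [sub_sub_cancel] at hρ]

end Sections

lemma one_div_pow_eq_rpow_neg {lam : ℝ} (hl0 : 0 < lam) (m : ℕ) :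
    (1 / lam) ^ m = lam ^ (-(m : ℝ)) := by
  rw [Real.rpow_neg hl0.le, Real.rpow_natCast, one_div, inv_pow]

lemma setLIntegral_Ioi_mul_rpow_le_tsum {g : ℝ → ℝ≥0∞} (hg : Monotone g) {lam b : ℝ}
    (hl0 : 0 < lam) (hl1 : lam < 1) (hb : 0 ≤ 1 + b) :
    ∫⁻ ρ in Ioi (1 / lam), g ρ * ENNReal.ofReal (ρ ^ (-(1 + b))) ≤
      ENNReal.ofReal (lam ^ (-(1 + b))) *
        ∑' n : ℕ, ENNReal.ofReal (lam ^ (b * ((n + 1 : ℕ) : ℝ))) * g ((1 / lam) ^ (n + 1)) := by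
  have hq : 1 < 1 / lam := by rw [lt_div_iff₀ hl0]; linarith
  have hcover : Ioi (1 / lam) ⊆ ⋃ n : ℕ, Ico ((1 / lam) ^ n) ((1 / lam) ^ (n + 1)) :=
    fun ρ hρ => mem_iUnion.2 (exists_nat_pow_near (hq.le.trans hρ.le) hq)
  have hpiece : ∀ n : ℕ, ∫⁻ ρ in Ico ((1 / lam) ^ n) ((1 / lam) ^ (n + 1)),
      g ρ * ENNReal.ofReal (ρ ^ (-(1 + b))) ≤ ENNReal.ofReal (lam ^ (-(1 + b))) *
        (ENNReal.ofReal (lam ^ (b * ((n + 1 : ℕ) : ℝ))) * g ((1 / lam) ^ (n + 1))) := by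
    intro n
    have hpos : 0 < (1 / lam) ^ n := by positivity
    have hscale : ((1 / lam) ^ n) ^ (-(1 + b)) * (1 / lam) ^ (n + 1) =
        lam ^ (-(1 + b)) * lam ^ (b * ((n + 1 : ℕ) : ℝ)) := by
      rw [one_div_pow_eq_rpow_neg hl0, one_div_pow_eq_rpow_neg hl0, ← Real.rpow_mul hl0.le,
        ← Real.rpow_add hl0, ← Real.rpow_add hl0]
      congr 1
      push_cast
      ring
    calc ∫⁻ ρ in Ico ((1 / lam) ^ n) ((1 / lam) ^ (n + 1)), g ρ * ENNReal.ofReal (ρ ^ (-(1 + b)))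
        ≤ ∫⁻ _ in Ico ((1 / lam) ^ n) ((1 / lam) ^ (n + 1)),
            g ((1 / lam) ^ (n + 1)) * ENNReal.ofReal (((1 / lam) ^ n) ^ (-(1 + b))) :=
          setLIntegral_mono' measurableSet_Ico fun ρ hρ => mul_le_mul' (hg hρ.2.le)
            (ENNReal.ofReal_le_ofReal (Real.rpow_le_rpow_of_nonpos hpos hρ.1 (by linarith)))
      _ ≤ g ((1 / lam) ^ (n + 1)) * ENNReal.ofReal (((1 / lam) ^ n) ^ (-(1 + b))) *
            ENNReal.ofReal ((1 / lam) ^ (n + 1)) := by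
          rw [setLIntegral_const, Real.volume_Ico]
          gcongr
          linarith
      _ = ENNReal.ofReal (lam ^ (-(1 + b))) *
            (ENNReal.ofReal (lam ^ (b * ((n + 1 : ℕ) : ℝ))) * g ((1 / lam) ^ (n + 1))) := by
          rw [mul_assoc, ← ENNReal.ofReal_mul (by positivity), hscale,
            ENNReal.ofReal_mul (by positivity)]
          ring
  calc ∫⁻ ρ in Ioi (1 / lam), g ρ * ENNReal.ofReal (ρ ^ (-(1 + b)))
      ≤ ∫⁻ ρ in ⋃ n : ℕ, Ico ((1 / lam) ^ n) ((1 / lam) ^ (n + 1)),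
          g ρ * ENNReal.ofReal (ρ ^ (-(1 + b))) := lintegral_mono_set hcover
    _ ≤ ∑' n : ℕ, ∫⁻ ρ in Ico ((1 / lam) ^ n) ((1 / lam) ^ (n + 1)),
          g ρ * ENNReal.ofReal (ρ ^ (-(1 + b))) := lintegral_iUnion_le _ _
    _ ≤ _ := (ENNReal.tsum_le_tsum hpiece).trans_eq ENNReal.tsum_mul_left

lemma setLIntegral_Ioo_le_tsum_Ioc (f : ℝ → ℝ≥0∞) {lam : ℝ} (hl0 : 0 < lam) (hl1 : lam < 1)
    (s : ℝ) :
    ∫⁻ η in Ioo (lam ^ s) lam, f η ≤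
      ∑' k : ℕ, if 1 ≤ k ∧ (k : ℝ) ≤ s then ∫⁻ η in Ioc (lam ^ (k + 1)) (lam ^ k), f η else 0 := by
  have hcover : Ioo (lam ^ s) lam ⊆
      ⋃ (k : ℕ) (_ : 1 ≤ k ∧ (k : ℝ) ≤ s), Ioc (lam ^ (k + 1)) (lam ^ k) := by
    intro η ⟨hsη, hηl⟩
    obtain ⟨k, hk⟩ := exists_nat_pow_near_of_lt_one ((Real.rpow_pos_of_pos hl0 s).trans hsη)
      (hηl.trans hl1).le hl0 hl1
    have hk1 : 1 ≤ k := by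
      by_contra! h
      rw [Nat.lt_one_iff.1 h, zero_add, pow_one] at hk
      linarith [hk.1]
    have hks : (k : ℝ) ≤ s := by
      by_contra! h
      have := Real.rpow_lt_rpow_of_exponent_gt hl0 hl1 h
      rw [Real.rpow_natCast] at this
      linarith [hk.2]
    exact mem_iUnion₂.2 ⟨k, ⟨hk1, hks⟩, hk⟩
  calc ∫⁻ η in Ioo (lam ^ s) lam, f η
      ≤ ∫⁻ η in ⋃ (k : ℕ) (_ : 1 ≤ k ∧ (k : ℝ) ≤ s), Ioc (lam ^ (k + 1)) (lam ^ k), f η :=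
        lintegral_mono_set hcover
    _ ≤ ∑' k : ℕ, ∫⁻ η in ⋃ (_ : 1 ≤ k ∧ (k : ℝ) ≤ s), Ioc (lam ^ (k + 1)) (lam ^ k), f η :=
        lintegral_iUnion_le _ _
    _ = _ := by
      congr 1 with k
      split_ifs with h <;> simp [h]

lemma rpow_half_le_two_pow_mul_sqrt {lam η : ℝ} (hl0 : 0 < lam) {m : ℕ} (hm : √lam⁻¹ ≤ 2 ^ m)
    (k : ℕ) (hη : lam ^ (k + 1) ≤ η) : lam ^ ((k : ℝ) / 2) ≤ 2 ^ m * √η :=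
  calc lam ^ ((k : ℝ) / 2) = √(lam ^ k) := by
        rw [Real.sqrt_eq_rpow, ← Real.rpow_natCast, ← Real.rpow_mul hl0.le]
        ring_nf
    _ = √lam⁻¹ * √(lam ^ (k + 1)) := by
        rw [← Real.sqrt_mul (inv_nonneg.2 hl0.le), pow_succ, mul_comm (lam ^ k),
          ← mul_assoc, inv_mul_cancel₀ hl0.ne', one_mul]
    _ ≤ 2 ^ m * √η := by gcongr

section WienerSeries

variable {N : ℕ} {d : Vec N → Vec N → ℝ} {S Ω : Set (Vec N × ℝ)} {z₀ : Vec N × ℝ}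
  {a b cd lam : ℝ} {m : ℕ}

noncomputable def sectionDensity (d : Vec N → Vec N → ℝ) (S Ω : Set (Vec N × ℝ))
    (z₀ : Vec N × ℝ) (lam b η : ℝ) : ℝ≥0∞ :=
  (∫⁻ ρ in Ioi (1 / lam), volume (Eset d S Ω z₀ lam ρ (z₀.2 - η)) /
      volume (dBall d z₀.1 √η) * ENNReal.ofReal (ρ ^ (-(1 + b)))) * ENNReal.ofReal η⁻¹

lemma sectionDensity_le (hd : GoodMetric d) (hdb : Doubling d cd) (hcd : 0 < cd)
    (hb : 0 ≤ 1 + b) (hl0 : 0 < lam) (hl1 : lam < 1) (hm : √lam⁻¹ ≤ 2 ^ m) (k : ℕ) {η : ℝ}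
    (hη : η ∈ Ioc (lam ^ (k + 1)) (lam ^ k)) :
    sectionDensity d S Ω z₀ lam b η ≤
      ENNReal.ofReal (lam ^ (-(1 + b)) * cd ^ m / lam ^ (k + 1)) *
        (∑' n : ℕ, ENNReal.ofReal (lam ^ (b * ((n + 1 : ℕ) : ℝ))) *
          volume {x | (x, z₀.2 - η) ∈ DSet d S Ω z₀ lam k (n + 1 : ℕ)}) /
        volume (dBall d z₀.1 (lam ^ ((k : ℝ) / 2))) := by
  have hη0 : 0 < η := (pow_pos hl0 _).trans hη.1
  set W := volume (dBall d z₀.1 √η)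
  set V := volume (dBall d z₀.1 (lam ^ ((k : ℝ) / 2)))
  set c := ENNReal.ofReal (cd ^ m)
  have hW : W ≠ 0 := (hd.volume_dBall_pos z₀.1 (Real.sqrt_pos.2 hη0)).ne'
  have hc : c ≠ 0 := by simp [c]; positivity
  have hVW : V ≤ c * W := hdb.volume_dBall_le_of_le_two_pow_mul hcd.le z₀.1
    (Real.sqrt_pos.2 hη0) (rpow_half_le_two_pow_mul_sqrt hl0 hm k hη.1.le)
  have hρ := setLIntegral_Ioi_mul_rpow_le_tsum
    (g := fun ρ => volume (Eset d S Ω z₀ lam ρ (z₀.2 - η)))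
    (fun _ _ h => measure_mono (Eset_mono h _)) hl0 hl1 hb
  have hηinv : ENNReal.ofReal η⁻¹ ≤ ENNReal.ofReal (lam ^ (k + 1))⁻¹ :=
    ENNReal.ofReal_le_ofReal (inv_anti₀ (pow_pos hl0 _) hη.1.le)
  unfold sectionDensity
  calc (∫⁻ ρ in Ioi (1 / lam), volume (Eset d S Ω z₀ lam ρ (z₀.2 - η)) / W *
        ENNReal.ofReal (ρ ^ (-(1 + b)))) * ENNReal.ofReal η⁻¹
      = (∫⁻ ρ in Ioi (1 / lam), volume (Eset d S Ω z₀ lam ρ (z₀.2 - η)) *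
          ENNReal.ofReal (ρ ^ (-(1 + b)))) / W * ENNReal.ofReal η⁻¹ := by
        congr 1
        rw [ENNReal.div_eq_inv_mul, ← lintegral_const_mul' _ _ (ENNReal.inv_ne_top.2 hW)]
        congr 1 with ρ
        rw [ENNReal.div_eq_inv_mul, mul_assoc]
    _ ≤ c * (ENNReal.ofReal (lam ^ (-(1 + b))) * ∑' n : ℕ,
          ENNReal.ofReal (lam ^ (b * ((n + 1 : ℕ) : ℝ))) *
            volume {x | (x, z₀.2 - η) ∈ DSet d S Ω z₀ lam k (n + 1 : ℕ)}) / V *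
          ENNReal.ofReal (lam ^ (k + 1))⁻¹ := by
        rw [← ENNReal.mul_div_mul_left _ W hc ENNReal.ofReal_ne_top]
        gcongr ?_ / ?_ * ?_
        refine mul_le_mul_right (hρ.trans ?_) _
        gcongr with n
        exact Eset_subset_slice_DSet k (n + 1) hη
    _ = _ := by
        simp only [div_eq_mul_inv, c]
        rw [ENNReal.ofReal_mul (by positivity), ENNReal.ofReal_mul (by positivity)]
        ring

lemma setLIntegral_sectionDensity_Ioc_le (hd : GoodMetric d) (hdb : Doubling d cd) (ha : 0 < a)
    (hcd : 0 < cd) (hb : 0 ≤ 1 + b) (hl0 : 0 < lam) (hl1 : lam < 1) (hm : √lam⁻¹ ≤ 2 ^ m)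
    (hS : MeasurableSet S) (hΩ : MeasurableSet Ω) (k : ℕ) :
    ∫⁻ η in Ioc (lam ^ (k + 1)) (lam ^ k), sectionDensity d S Ω z₀ lam b η ≤
      ENNReal.ofReal (lam ^ (-(1 + b)) * cd ^ m * gaussConst a cd / lam) *
        ∑' n : ℕ, ENNReal.ofReal (lam ^ (b * ((n + 1 : ℕ) : ℝ))) *
          capac S (gaussK d a) (DSet d S Ω z₀ lam k (n + 1 : ℕ)) /
          volume (dBall d z₀.1 (lam ^ ((k : ℝ) / 2))) := by
  set V := volume (dBall d z₀.1 (lam ^ ((k : ℝ) / 2)))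
  set D : ℕ → Set (Vec N × ℝ) := fun n => DSet d S Ω z₀ lam k (n + 1 : ℕ)
  set w : ℕ → ℝ≥0∞ := fun n => ENNReal.ofReal (lam ^ (b * ((n + 1 : ℕ) : ℝ)))
  have hD : ∀ n, MeasurableSet (D n) := fun n => measurableSet_DSet hd hS hΩ z₀ lam _ _
  have hcap : ∀ n, ∫⁻ η in Ioc (lam ^ (k + 1)) (lam ^ k), volume {x | (x, z₀.2 - η) ∈ D n} ≤
      ENNReal.ofReal (gaussConst a cd * lam ^ k) * capac S (gaussK d a) (D n) := by
    intro n
    have hcap := volume_le_mul_capac_gaussK hd hdb ha hcd S (hD n) (isBounded_DSet hd z₀ lam _ _)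
      (sub_lt_self z₀.2 (pow_pos hl0 k)) fun ζ hζ => snd_mem_Icc_of_mem_DSet hl0 k _ hζ
    rw [sub_sub_cancel] at hcap
    exact (setLIntegral_le_lintegral _ _).trans
      ((lintegral_volume_slice_sub (hD n) _).trans_le hcap)
  have hconst : ENNReal.ofReal (lam ^ (-(1 + b)) * cd ^ m * gaussConst a cd / lam) =
      ENNReal.ofReal (lam ^ (-(1 + b)) * cd ^ m / lam ^ (k + 1)) *
        ENNReal.ofReal (gaussConst a cd * lam ^ k) := by
    rw [← ENNReal.ofReal_mul (by positivity), pow_succ]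
    congr 1
    field_simp
  calc ∫⁻ η in Ioc (lam ^ (k + 1)) (lam ^ k), sectionDensity d S Ω z₀ lam b η
      ≤ ∫⁻ η in Ioc (lam ^ (k + 1)) (lam ^ k),
          ENNReal.ofReal (lam ^ (-(1 + b)) * cd ^ m / lam ^ (k + 1)) *
            (∑' n : ℕ, w n * volume {x | (x, z₀.2 - η) ∈ D n}) / V :=
        setLIntegral_mono' measurableSet_Ioc fun η hη =>
          sectionDensity_le hd hdb hcd hb hl0 hl1 hm k hη
    _ = ENNReal.ofReal (lam ^ (-(1 + b)) * cd ^ m / lam ^ (k + 1)) *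
          (∑' n : ℕ, w n * ∫⁻ η in Ioc (lam ^ (k + 1)) (lam ^ k),
            volume {x | (x, z₀.2 - η) ∈ D n}) / V := by
        simp_rw [ENNReal.div_eq_inv_mul]
        rw [lintegral_const_mul' _ _ (ENNReal.inv_ne_top.2
            (hd.volume_dBall_pos z₀.1 (by positivity)).ne'),
          lintegral_const_mul' _ _ ENNReal.ofReal_ne_top,
          lintegral_tsum fun n => ((measurable_volume_slice_sub (hD n) _).const_mul _).aemeasurable]
        congr 3 with n
        exact lintegral_const_mul' _ _ ENNReal.ofReal_ne_top
    _ ≤ ENNReal.ofReal (lam ^ (-(1 + b)) * cd ^ m / lam ^ (k + 1)) *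
          (∑' n : ℕ, w n * (ENNReal.ofReal (gaussConst a cd * lam ^ k) *
            capac S (gaussK d a) (D n))) / V := by
        gcongr with n
        exact hcap n
    _ = _ := by
        simp_rw [hconst, ENNReal.div_eq_inv_mul, ← ENNReal.tsum_mul_left]
        congr 1 with n
        ring

lemma zSeries_eq_tsum_ite (d : Vec N → Vec N → ℝ) (S Ω : Set (Vec N × ℝ)) (z₀ : Vec N × ℝ)
    (a b lam s : ℝ) :
    zSeries d S Ω z₀ a b lam s = ∑' k : ℕ, if 1 ≤ k ∧ (k : ℝ) ≤ s then
      ∑' n : ℕ, ENNReal.ofReal (lam ^ (b * ((n + 1 : ℕ) : ℝ))) *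
        capac S (gaussK d a) (DSet d S Ω z₀ lam k (n + 1 : ℕ)) /
        volume (dBall d z₀.1 (lam ^ ((k : ℝ) / 2)))
    else 0 := by
  unfold zSeries
  congr 1 with k
  split_ifs with hk
  · rw [tsum_eq_zero_add' ENNReal.summable]
    simp [hk]
  · simp [← and_assoc, hk]

lemma setLIntegral_sectionDensity_le_zSeries (hd : GoodMetric d) (hdb : Doubling d cd)
    (ha : 0 < a) (hcd : 0 < cd) (hb : 0 ≤ 1 + b) (hl0 : 0 < lam) (hl1 : lam < 1)
    (hm : √lam⁻¹ ≤ 2 ^ m) (hS : MeasurableSet S) (hΩ : MeasurableSet Ω) (s : ℝ) :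
    ∫⁻ η in Ioo (lam ^ s) lam, sectionDensity d S Ω z₀ lam b η ≤
      ENNReal.ofReal (lam ^ (-(1 + b)) * cd ^ m * gaussConst a cd / lam) *
        zSeries d S Ω z₀ a b lam s := by
  rw [zSeries_eq_tsum_ite, ← ENNReal.tsum_mul_left]
  refine (setLIntegral_Ioo_le_tsum_Ioc _ hl0 hl1 s).trans (ENNReal.tsum_le_tsum fun k => ?_)
  split_ifs
  · exact setLIntegral_sectionDensity_Ioc_le hd hdb ha hcd hb hl0 hl1 hm hS hΩ k
  · simp

end WienerSeries

/-- The integral bound (5.2) in the paper: the Wiener-type series `z_a^b(λ;s)`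
dominates the double integral of the measures of the sections `E_λ`. -/
theorem stmt11 (a b lam cd : ℝ) (ha : 0 < a) (hb : 0 < b)
    (hlam : lam ∈ Set.Ioo 0 1) (hcd : 1 < cd) :
    ∃ c : ℝ, 0 < c ∧
      ∀ (N : ℕ), 1 ≤ N → ∀ d : Vec N → Vec N → ℝ, GoodMetric d → Doubling d cd →
      ∀ T₁ T₂ : EReal, T₁ < T₂ →
      ∀ Ω : Set (Vec N × ℝ), IsOpen Ω → Bornology.IsBounded Ω →
        closure Ω ⊆ strip N T₁ T₂ →
      ∀ z₀ : Vec N × ℝ, z₀ ∈ frontier Ω → T₁ < ((z₀.2 - lam : ℝ) : EReal) →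
      ∀ s : ℝ, 1 ≤ s →
      ENNReal.ofReal c *
        ∫⁻ η in Set.Ioo (lam ^ s) lam,
          (∫⁻ ρ in Set.Ioi (1 / lam),
            volume (Eset d (strip N T₁ T₂) Ω z₀ lam ρ (z₀.2 - η)) /
              volume (dBall d z₀.1 (Real.sqrt η)) *
              ENNReal.ofReal (ρ ^ (-(1 + b)))) *
            ENNReal.ofReal η⁻¹ ≤
        zSeries d (strip N T₁ T₂) Ω z₀ a b lam s := by
  obtain ⟨hl0, hl1⟩ := hlam
  have hcd0 : 0 < cd := one_pos.trans hcd
  obtain ⟨m, hm⟩ := pow_unbounded_of_one_lt √lam⁻¹ one_lt_two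
  set K := lam ^ (-(1 + b)) * cd ^ m * gaussConst a cd / lam
  have hK : 0 < K := by have := gaussConst_pos ha hcd0; positivity
  refine ⟨K⁻¹, inv_pos.2 hK, fun N _ d hd hdb T₁ T₂ _ Ω hΩ _ _ z₀ _ _ s _ => ?_⟩
  have hS : MeasurableSet (strip N T₁ T₂) :=
    measurableSet_Ioo.preimage (measurable_coe_real_ereal.comp measurable_snd)
  calc ENNReal.ofReal K⁻¹ * ∫⁻ η in Ioo (lam ^ s) lam, sectionDensity d (strip N T₁ T₂) Ω z₀ lam b η
      ≤ ENNReal.ofReal K⁻¹ * (ENNReal.ofReal K * zSeries d (strip N T₁ T₂) Ω z₀ a b lam s) := by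
        gcongr
        exact setLIntegral_sectionDensity_le_zSeries hd hdb ha hcd0 (by linarith) hl0 hl1 hm.le hS
          hΩ.measurableSet s
    _ = zSeries d (strip N T₁ T₂) Ω z₀ a b lam s := by
        rw [← mul_assoc, ← ENNReal.ofReal_mul (inv_pos.2 hK).le, inv_mul_cancel₀ hK.ne',
          ENNReal.ofReal_one, one_mul]
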